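/- arXiv:1104.3542 — 5 statements merged into one kernel-verified Lean document; each statement's English description precedes it below -/
import Mathlib

section
/- A right Kan extension with values in a category having all copowers (i.e., coproducts of copies of an object indexed by a set) is pointwise: it is preserved by every hom-functor Hom(C, -). -/
/-!
Copowers make `Hom(c, -) : B ⥤ Type` a right adjoint, with left adjoint `I ↦ ∐_I c`, and a
right adjoint `R` preserves right Kan extensions: transposing along the adjunction `L ⊣ R`
identifies `G ⟶ T ⋙ R` with `G ⋙ L ⟶ T`, hence, by the universal property of `T`, with
`U ⋙ G ⋙ L ⟶ S`, and transposing back with `U ⋙ G ⟶ S ⋙ R`.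
-/

open CategoryTheory CategoryTheory.Limits

universe v u₁ u₂ u₃

namespace CategoryTheory.Functor

variable {A C B H : Type*} [Category A] [Category C] [Category B] [Category H]

lemma isRightKanExtension_of_bijective {U : A ⥤ C} {S : A ⥤ B} (T : C ⥤ B) (e : U ⋙ T ⟶ S)
    (h : ∀ G : C ⥤ B, Function.Bijective fun β : G ⟶ T => whiskerLeft U β ≫ e) :
    T.IsRightKanExtension e := by
  refine ⟨⟨IsTerminal.ofUniqueHom (fun X => CostructuredArrow.homMk
    ((h X.left).2 X.hom).choose ?_) (fun X m => ?_)⟩⟩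
  · exact ((h X.left).2 X.hom).choose_spec
  · have hm : whiskerLeft U m.left ≫ e = X.hom := by simpa using m.w
    ext1
    exact (h X.left).1 (hm.trans ((h X.left).2 X.hom).choose_spec.symm)

lemma isRightKanExtension_comp_of_adjunction {L : H ⥤ B} {R : B ⥤ H} (adj : L ⊣ R)
    {U : A ⥤ C} {S : A ⥤ B} (T : C ⥤ B) (e : U ⋙ T ⟶ S) [T.IsRightKanExtension e] :
    (T ⋙ R).IsRightKanExtension ((associator U T R).inv ≫ whiskerRight e R) := by
  refine isRightKanExtension_of_bijective _ _ fun G => ?_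
  let transpose := ((adj.whiskerRight C).homEquiv G T).symm.trans
    ((T.homEquivOfIsRightKanExtension e (G ⋙ L)).trans
      ((adj.whiskerRight A).homEquiv (U ⋙ G) S))
  have transpose_eq : ⇑transpose = fun β => whiskerLeft U β ≫ (associator U T R).inv ≫ whiskerRight e R := by
    funext β
    ext a
    simp only [transpose, Equiv.trans_apply, Adjunction.homEquiv_counit]
    rw [Adjunction.homEquiv_unit]
    simp
  exact transpose_eq ▸ transpose.bijective

instance preservesRightKanExtension_of_isRightAdjoint (R : B ⥤ H) [R.IsRightAdjoint]
    (S : A ⥤ B) (U : A ⥤ C) : R.PreservesRightKanExtension S U :=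
  ⟨fun T e _ => isRightKanExtension_comp_of_adjunction (Adjunction.ofIsRightAdjoint R) T e⟩

end CategoryTheory.Functor

section Copower

variable {B : Type*} [Category.{v} B] (c : B) [∀ I : Type v, HasCoproduct fun _ : I => c]

noncomputable def copowerHomEquiv (I : Type v) (b : B) :
    (∐ (fun _ : I => c) ⟶ b) ≃ (I ⟶ (coyoneda.obj (Opposite.op c)).obj b) where
  toFun g := TypeCat.ofHom fun i => Sigma.ι (fun _ : I => c) i ≫ g
  invFun h := Sigma.desc h
  left_inv g := by cat_disch
  right_inv h := by cat_disch

instance isRightAdjoint_coyoneda_obj_of_hasCopowers :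
    (coyoneda.obj (Opposite.op c)).IsRightAdjoint :=
  ⟨_, ⟨Adjunction.adjunctionOfEquivLeft (copowerHomEquiv c)
    (fun _ _ _ _ _ => by ext; simp [copowerHomEquiv])⟩⟩

end Copower

/-- A right Kan extension with values in a category `B` having all copowers (coproducts of
copies of an object indexed by a set) is pointwise: it is preserved by every hom-functor
`Hom(c, -) : B ⥤ Type`. -/
theorem stmt2 {A : Type u₁} [Category.{v} A] {C : Type u₂} [Category.{v} C]
    {B : Type u₃} [Category.{v} B]
    (copowers : ∀ (I : Type v) (b : B), HasCoproduct (fun _ : I => b))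
    (U : A ⥤ C) (S : A ⥤ B) (T : C ⥤ B) (e : U ⋙ T ⟶ S) [T.IsRightKanExtension e] :
    ∀ c : B, (T ⋙ coyoneda.obj (Opposite.op c)).IsRightKanExtension
      ((Functor.associator U T (coyoneda.obj (Opposite.op c))).inv ≫
        CategoryTheory.Functor.whiskerRight e (coyoneda.obj (Opposite.op c))) := by
  intro c
  have := (copowers · c)
  infer_instance
end

section
/- Let U : A ⥤ C be a functor that creates all limits and admits a pointwise codensity monad (i.e., the right Kan extension of U along U exists and is pointwise, computed by limits over comma categories c ↓ U). Then U has a left adjoint. -/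
open CategoryTheory

universe v u

/-!
For each `c : C`, the pointwise Kan extension provides a limit of `(c ↓ U) ⥤ A ⥤ C`; since `U`
creates it, the projection `c ↓ U ⥤ A` has a limit preserved by `U`, and hence the identity functor
of `c ↓ U` has a limit. The limit of the identity functor of a category is an initial object, so
every comma category `c ↓ U` has an initial object, i.e. `U` has a left adjoint.
-/

namespace CategoryTheory.Limits

theorem hasInitial_of_hasLimit_id (J : Type*) [Category J] [HasLimit (𝟭 J)] : HasInitial J := by
  have π_self : limit.π (𝟭 J) (limit (𝟭 J)) = 𝟙 _ :=
    limit.hom_ext fun j => by simpa using limit.w (𝟭 J) (limit.π (𝟭 J) j)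
  refine (IsInitial.ofUniqueHom (limit.π (𝟭 J)) fun j f => ?_).hasInitial
  simpa [π_self] using limit.w (𝟭 J) f

end CategoryTheory.Limits

open CategoryTheory.Limits

theorem CategoryTheory.StructuredArrow.hasInitial_of_createsLimit_proj {A C : Type*} [Category A]
    [Category C] (c : C) (U : A ⥤ C) [CreatesLimit (proj c U) U] [HasLimit (proj c U ⋙ U)] :
    HasInitial (StructuredArrow c U) := by
  have : HasLimit (proj c U) := hasLimit_of_created _ U
  have : PreservesLimit (𝟭 _ ⋙ proj c U) U :=
    have := preservesLimit_of_createsLimit_and_hasLimit (proj c U) U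
    preservesLimit_of_iso_diagram U (Functor.leftUnitor _).symm
  exact hasInitial_of_hasLimit_id _

/-- If `U : A ⥤ C` creates all limits and admits a pointwise codensity monad (the right Kan
extension of `U` along `U` exists pointwise, computed by limits over the comma categories
`c ↓ U`), then `U` has a left adjoint. -/
theorem stmt5 {A : Type u} [Category.{v} A] {C : Type u} [Category.{v} C]
    (U : A ⥤ C) [CreatesLimitsOfSize.{v, max u v} U]
    [Functor.HasPointwiseRightKanExtension U U] :
    U.IsRightAdjoint := by
  have (c : C) : HasInitial (StructuredArrow c U) :=
    have : HasLimit (StructuredArrow.proj c U ⋙ U) :=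
      (inferInstance : U.HasPointwiseRightKanExtensionAt U c)
    StructuredArrow.hasInitial_of_createsLimit_proj c U
  exact isRightAdjointOfStructuredArrowInitials U
end

section
/- A concrete category whose forgetful functor creates all limits and coequalizers of absolute pairs (a Beck category) and which admits a pointwise codensity monad is monadic: it is equivalent (concretely isomorphic) to the Eilenberg–Moore category of its codensity monad. -/
/-!
For `c : C`, the pointwise codensity monad at `c` is the limit of `c / U ⥤ A ⥤ C`. Since `U`
creates this limit, the projection `c / U ⥤ A` has a limit which lifts to a limit of the identity
functor of `c / U`; its apex is an initial object, i.e. a universal arrow from `c` to `U`. Hence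
`U` is a right adjoint, and Beck's monadicity theorem applies.
-/

open CategoryTheory CategoryTheory.Limits

universe v u

/-- With `L := limit (𝟭 J)`, naturality of the limit cone at its own legs forces `π L = 𝟙 L`,
and naturality at any `m : L ⟶ j` then reads `m = π j`. -/
theorem hasInitial_of_hasLimit_id {J : Type*} [Category* J] [HasLimit (𝟭 J)] : HasInitial J := by
  have hπ_self : limit.π (𝟭 J) (limit (𝟭 J)) = 𝟙 _ :=
    limit.hom_ext fun j => (limit.w (𝟭 J) (limit.π (𝟭 J) j)).trans (Category.id_comp _).symm
  have : ∀ j, Unique (limit (𝟭 J) ⟶ j) := fun j =>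
    { default := limit.π (𝟭 J) j
      uniq := fun m => by simpa [hπ_self] using limit.w (𝟭 J) m }
  exact hasInitial_of_unique (limit (𝟭 J))

theorem CategoryTheory.Functor.isRightAdjoint_of_hasPointwiseRightKanExtension
    {A C : Type*} [Category* A] [Category* C] (U : A ⥤ C) [U.HasPointwiseRightKanExtension U]
    [∀ c : C, CreatesLimit (StructuredArrow.proj c U) U] : U.IsRightAdjoint := by
  have (c : C) : HasInitial (StructuredArrow c U) := by
    have : HasLimit (StructuredArrow.proj c U ⋙ U) :=
      (inferInstance : U.HasPointwiseRightKanExtensionAt U c)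
    have : HasLimit (StructuredArrow.proj c U) := hasLimit_of_created _ U
    exact hasInitial_of_hasLimit_id
  exact isRightAdjointOfStructuredArrowInitials U

theorem stmt6_general {A : Type u} [Category.{v} A] {C : Type u} [Category.{v} C]
    (U : A ⥤ C)
    [CreatesLimitsOfSize.{v, max u v} U]
    (hBeck : ∀ {X Y : A} (f g : X ⟶ Y), HasSplitCoequalizer (U.map f) (U.map g) →
      Nonempty (CreatesColimit (parallelPair f g) U))
    [Functor.HasPointwiseRightKanExtension U U] :
    Nonempty (MonadicRightAdjoint U) := by
  have := U.isRightAdjoint_of_hasPointwiseRightKanExtension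
  have : Monad.CreatesColimitOfIsSplitPair U := ⟨fun f g _ => (hBeck f g ‹_›).some⟩
  exact ⟨Monad.monadicOfCreatesGSplitCoequalizers (Adjunction.ofIsRightAdjoint U)⟩

/-- A Beck category (a concrete category whose faithful forgetful functor creates all limits
and coequalizers of absolute (split) pairs) admitting a pointwise codensity monad is monadic. -/
theorem stmt6 {A : Type u} [Category.{v} A] {C : Type u} [Category.{v} C]
    (U : A ⥤ C) [U.Faithful]
    [CreatesLimitsOfSize.{v, max u v} U]
    (hBeck : ∀ {X Y : A} (f g : X ⟶ Y), HasSplitCoequalizer (U.map f) (U.map g) →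
      Nonempty (CreatesColimit (parallelPair f g) U))
    [Functor.HasPointwiseRightKanExtension U U] :
    Nonempty (MonadicRightAdjoint U) :=
  stmt6_general U hBeck
end

section
/- Let (A, U) be a concrete category over C such that the right Kan extension Ran_U U = (M, ε) exists. Then for every endofunctor F on C and every concrete functor J : A ⥤ Alg F (i.e., U_F ∘ J = U), the right Kan extension Ran_U J exists; moreover it is preserved by the forgetful functor U_F : Alg F ⥤ C and by every concrete functor T : Alg F ⥤ Alg G for any endofunctor G on C. -/
/-!
The forgetful functor `Algebra G ⥤ C` creates right Kan extensions. If `(R, ε)` is a right Kan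
extension of `K ⋙ forget G` along `U`, its universal property applied to `G ε` followed by the
structure maps of `K` produces `R ⋙ G ⟶ R`: an algebra structure on `R` for which `ε` becomes a
natural transformation of algebras. Conversely, any lift of a right Kan extension through
`forget G` is a right Kan extension: the factorizations computed in `C` are algebra morphisms
because of the uniqueness part of the universal property. A concrete functor `T` satisfies
`T ⋙ forget G' ≅ forget G`, so `V ⋙ T` is again a lift of `(R, ε)`.
-/

open CategoryTheory

namespace CategoryTheory.Endofunctor.Algebra

open _root_.CategoryTheory.Functor

variable {C : Type*} [Category C] {G : C ⥤ C}

def strNatTrans {B : Type*} [Category B] (X : B ⥤ Algebra G) :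
    (X ⋙ forget G) ⋙ G ⟶ X ⋙ forget G where
  app b := (X.obj b).str
  naturality _ _ f := (X.map f).h

def natTransMk {B : Type*} [Category B] {X Y : B ⥤ Algebra G} (τ : X ⋙ forget G ⟶ Y ⋙ forget G)
    (h : whiskerRight τ G ≫ strNatTrans Y = strNatTrans X ≫ τ) : X ⟶ Y where
  app b := ⟨τ.app b, NatTrans.congr_app h b⟩
  naturality _ _ f := Algebra.Hom.ext (τ.naturality f)

section Reflection

variable {A D : Type*} [Category A] [Category D] {U : A ⥤ D} {K : A ⥤ Algebra G}
  {V : D ⥤ Algebra G} (ζ : U ⋙ V ⟶ K)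
  [(V ⋙ forget G).IsRightKanExtension
    ((associator U V (forget G)).inv ≫ whiskerRight ζ (forget G))]

noncomputable def forgetLift (X : D ⥤ Algebra G) (φ : U ⋙ X ⟶ K) :
    X ⋙ forget G ⟶ V ⋙ forget G :=
  (V ⋙ forget G).liftOfIsRightKanExtension
    ((associator U V (forget G)).inv ≫ whiskerRight ζ (forget G)) (X ⋙ forget G)
    ((associator U X (forget G)).inv ≫ whiskerRight φ (forget G))

lemma forgetLift_fac_app (X : D ⥤ Algebra G) (φ : U ⋙ X ⟶ K) (a : A) :
    (forgetLift ζ X φ).app (U.obj a) ≫ (forget G).map (ζ.app a) = (forget G).map (φ.app a) := by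
  have fac := (V ⋙ forget G).liftOfIsRightKanExtension_fac_app
    ((associator U V (forget G)).inv ≫ whiskerRight ζ (forget G)) (X ⋙ forget G)
    ((associator U X (forget G)).inv ≫ whiskerRight φ (forget G)) a
  simp only [NatTrans.comp_app, associator_inv_app, whiskerRight_app, Category.id_comp] at fac
  exact fac

lemma comp_forget_hom_ext {H : D ⥤ C} (γ₁ γ₂ : H ⟶ V ⋙ forget G)
    (h : ∀ a, γ₁.app (U.obj a) ≫ (forget G).map (ζ.app a) =
      γ₂.app (U.obj a) ≫ (forget G).map (ζ.app a)) : γ₁ = γ₂ := by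
  apply (V ⋙ forget G).hom_ext_of_isRightKanExtension
    ((associator U V (forget G)).inv ≫ whiskerRight ζ (forget G))
  ext a
  simpa only [NatTrans.comp_app, whiskerLeft_app, associator_inv_app, whiskerRight_app,
    Category.id_comp] using h a

lemma whiskerRight_forgetLift_comp_strNatTrans (X : D ⥤ Algebra G) (φ : U ⋙ X ⟶ K) :
    whiskerRight (forgetLift ζ X φ) G ≫ strNatTrans V = strNatTrans X ≫ forgetLift ζ X φ := by
  refine comp_forget_hom_ext ζ _ _ fun a ↦ ?_
  have hζ : G.map ((forget G).map (ζ.app a)) ≫ (strNatTrans K).app a =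
      (strNatTrans V).app (U.obj a) ≫ (forget G).map (ζ.app a) := (ζ.app a).h
  have hφ : G.map ((forget G).map (φ.app a)) ≫ (strNatTrans K).app a =
      (strNatTrans X).app (U.obj a) ≫ (forget G).map (φ.app a) := (φ.app a).h
  simp only [NatTrans.comp_app, whiskerRight_app, Category.assoc]
  rw [← hζ, ← G.map_comp_assoc, forgetLift_fac_app, hφ]

noncomputable def liftOfForget (X : D ⥤ Algebra G) (φ : U ⋙ X ⟶ K) : X ⟶ V :=
  natTransMk (forgetLift ζ X φ) (whiskerRight_forgetLift_comp_strNatTrans ζ X φ)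

lemma whiskerLeft_liftOfForget_comp (X : D ⥤ Algebra G) (φ : U ⋙ X ⟶ K) :
    whiskerLeft U (liftOfForget ζ X φ) ≫ ζ = φ := by
  ext a
  exact forgetLift_fac_app ζ X φ a

lemma hom_ext_of_forget {X : D ⥤ Algebra G} (γ₁ γ₂ : X ⟶ V)
    (h : whiskerLeft U γ₁ ≫ ζ = whiskerLeft U γ₂ ≫ ζ) : γ₁ = γ₂ := by
  apply ((whiskeringRight D _ _).obj (forget G)).map_injective
  refine comp_forget_hom_ext ζ _ _ fun a ↦ ?_
  simpa only [whiskeringRight_obj_map, whiskerRight_app, NatTrans.comp_app, whiskerLeft_app,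
    Functor.map_comp] using congrArg (fun φ ↦ (forget G).map (φ.app a)) h

theorem isRightKanExtension_of_forget : V.IsRightKanExtension ζ :=
  ⟨⟨Limits.IsTerminal.ofUniqueHom
    (fun E ↦ CostructuredArrow.homMk (liftOfForget ζ E.left E.hom)
      (whiskerLeft_liftOfForget_comp ζ E.left E.hom))
    (fun E m ↦ CostructuredArrow.hom_ext _ _ (hom_ext_of_forget ζ _ _
      ((CostructuredArrow.w m).trans (whiskerLeft_liftOfForget_comp ζ E.left E.hom).symm)))⟩⟩

end Reflection

section Lifting

variable {A D : Type*} [Category A] [Category D] {U : A ⥤ D} {K : A ⥤ Algebra G}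
  (R : D ⥤ C) (ε : U ⋙ R ⟶ K ⋙ forget G) [R.IsRightKanExtension ε]

noncomputable def rightKanExtensionStr : R ⋙ G ⟶ R :=
  R.liftOfIsRightKanExtension ε (R ⋙ G)
    ((associator U R G).inv ≫ whiskerRight ε G ≫ strNatTrans K)

lemma rightKanExtensionStr_app_comp (a : A) :
    (rightKanExtensionStr R ε).app (U.obj a) ≫ ε.app a = G.map (ε.app a) ≫ (K.obj a).str := by
  have fac := R.liftOfIsRightKanExtension_fac_app ε (R ⋙ G)
    ((associator U R G).inv ≫ whiskerRight ε G ≫ strNatTrans K) a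
  simp only [NatTrans.comp_app, associator_inv_app, whiskerRight_app, Category.id_comp] at fac
  exact fac

noncomputable def liftRightKanExtension : D ⥤ Algebra G where
  obj d := ⟨R.obj d, (rightKanExtensionStr R ε).app d⟩
  map f := ⟨R.map f, (rightKanExtensionStr R ε).naturality f⟩

noncomputable def liftRightKanExtensionCounit : U ⋙ liftRightKanExtension R ε ⟶ K where
  app a := ⟨ε.app a, (rightKanExtensionStr_app_comp R ε a).symm⟩
  naturality _ _ f := Algebra.Hom.ext (ε.naturality f)

instance isRightKanExtension_liftRightKanExtension_forget :
    (liftRightKanExtension R ε ⋙ forget G).IsRightKanExtension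
      ((associator U _ (forget G)).inv ≫
        whiskerRight (liftRightKanExtensionCounit R ε) (forget G)) :=
  isRightKanExtension_of_iso (Iso.refl R : R ≅ liftRightKanExtension R ε ⋙ forget G) ε _ (by
    ext a
    exact (Category.id_comp _).trans (Category.id_comp _))

instance isRightKanExtension_liftRightKanExtension :
    (liftRightKanExtension R ε).IsRightKanExtension (liftRightKanExtensionCounit R ε) :=
  isRightKanExtension_of_forget _

end Lifting

theorem isRightKanExtension_comp_of_forget_iso {A D : Type*} [Category A] [Category D]
    {U : A ⥤ D} {K : A ⥤ Algebra G} {V : D ⥤ Algebra G} (ζ : U ⋙ V ⟶ K)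
    [(V ⋙ forget G).IsRightKanExtension
      ((associator U V (forget G)).inv ≫ whiskerRight ζ (forget G))]
    {G' : C ⥤ C} (T : Algebra G ⥤ Algebra G') (e : T ⋙ forget G' ≅ forget G) :
    (V ⋙ T).IsRightKanExtension ((associator U V T).inv ≫ whiskerRight ζ T) := by
  have : ((V ⋙ T) ⋙ forget G').IsRightKanExtension ((associator U (V ⋙ T) (forget G')).inv ≫
      whiskerRight ((associator U V T).inv ≫ whiskerRight ζ T) (forget G')) := by
    refine (isRightKanExtension_iff_of_iso₂
      ((associator U V (forget G)).inv ≫ whiskerRight ζ (forget G)) _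
      (isoWhiskerLeft K e.symm ≪≫ (associator K T (forget G')).symm)
      (isoWhiskerLeft V e.symm ≪≫ (associator V T (forget G')).symm) ?_).1 inferInstance
    ext a
    simp only [NatTrans.comp_app, whiskerLeft_app, Iso.trans_hom, isoWhiskerLeft_hom, Iso.symm_hom,
      associator_inv_app, whiskerRight_app, Category.id_comp, Category.comp_id]
    exact (e.inv.naturality (ζ.app a)).symm
  exact isRightKanExtension_of_forget _

end CategoryTheory.Endofunctor.Algebra

theorem stmt15_general {A : Type*} [Category A] {C : Type*} [Category C]
    (U : A ⥤ C) (M : C ⥤ C) (ε : U ⋙ M ⟶ U) [M.IsRightKanExtension ε]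
    (F : C ⥤ C) (J : A ⥤ Endofunctor.Algebra F)
    (hJ : J ⋙ Endofunctor.Algebra.forget F = U) :
    ∃ (V : C ⥤ Endofunctor.Algebra F) (ζ : U ⋙ V ⟶ J),
      V.IsRightKanExtension ζ ∧
      (V ⋙ Endofunctor.Algebra.forget F).IsRightKanExtension
        ((Functor.associator U V (Endofunctor.Algebra.forget F)).inv ≫
          CategoryTheory.Functor.whiskerRight ζ (Endofunctor.Algebra.forget F)) ∧
      (∀ (G : C ⥤ C) (T : Endofunctor.Algebra F ⥤ Endofunctor.Algebra G),
        T ⋙ Endofunctor.Algebra.forget G = Endofunctor.Algebra.forget F →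
        (V ⋙ T).IsRightKanExtension
          ((Functor.associator U V T).inv ≫ CategoryTheory.Functor.whiskerRight ζ T)) := by
  subst hJ
  exact ⟨Endofunctor.Algebra.liftRightKanExtension M ε,
    Endofunctor.Algebra.liftRightKanExtensionCounit M ε, inferInstance, inferInstance,
    fun _ T hT ↦ Endofunctor.Algebra.isRightKanExtension_comp_of_forget_iso _ T (eqToIso hT)⟩

/-- Let `(A, U)` be a concrete category over `C` such that `Ran_U U = (M, ε)` exists. Then for
every endofunctor `F` on `C` and every concrete functor `J : A ⥤ Alg F`, the right Kan
extension `Ran_U J` exists; moreover it is preserved by the forgetful functor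
`U_F : Alg F ⥤ C` and by every concrete functor `T : Alg F ⥤ Alg G`. -/
theorem stmt15 {A : Type*} [Category A] {C : Type*} [Category C]
    (U : A ⥤ C) [U.Faithful] (M : C ⥤ C) (ε : U ⋙ M ⟶ U) [M.IsRightKanExtension ε]
    (F : C ⥤ C) (J : A ⥤ Endofunctor.Algebra F)
    (hJ : J ⋙ Endofunctor.Algebra.forget F = U) :
    ∃ (V : C ⥤ Endofunctor.Algebra F) (ζ : U ⋙ V ⟶ J),
      V.IsRightKanExtension ζ ∧
      (V ⋙ Endofunctor.Algebra.forget F).IsRightKanExtension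
        ((Functor.associator U V (Endofunctor.Algebra.forget F)).inv ≫
          CategoryTheory.Functor.whiskerRight ζ (Endofunctor.Algebra.forget F)) ∧
      (∀ (G : C ⥤ C) (T : Endofunctor.Algebra F ⥤ Endofunctor.Algebra G),
        T ⋙ Endofunctor.Algebra.forget G = Endofunctor.Algebra.forget F →
        (V ⋙ T).IsRightKanExtension
          ((Functor.associator U V T).inv ≫ CategoryTheory.Functor.whiskerRight ζ T)) :=
  stmt15_general U M ε F J hJ
end

section
/- There exists a functor U : A ⥤ C that creates all limits and all colimits (in particular is a 'Beck' forgetful functor), admits a codensity monad, but has no left adjoint; hence the codensity monad of U is not a pointwise right Kan extension. -/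
open CategoryTheory

namespace Stmt17

open CategoryTheory.Limits

/-- Two disjoint copies of the arrow category, as a poset. -/
@[ext]
structure Cc where
  comp : Bool
  lvl : Bool

instance : PartialOrder Cc where
  le a b := a.comp = b.comp ∧ a.lvl ≤ b.lvl
  le_refl a := ⟨rfl, le_refl _⟩
  le_trans a b c h1 h2 := ⟨h1.1.trans h2.1, h1.2.trans h2.2⟩
  le_antisymm a b h1 h2 := Cc.ext h1.1 (le_antisymm h1.2 h2.2)

/-- The inclusion of the discrete category on two objects as the two sources. -/
def Uf : Discrete Bool ⥤ Cc := Discrete.functor (fun b => (⟨b, false⟩ : Cc))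

lemma minimal {x : Cc} {b : Bool} (h : x ≤ ⟨b, false⟩) : x = ⟨b, false⟩ :=
  Cc.ext h.1 (le_antisymm h.2 (Bool.false_le _))

instance : Uf.Faithful where
  map_injective {X Y} _ _ _ := Subsingleton.elim _ _

instance : Uf.Full where
  map_surjective {a b} f :=
    ⟨eqToHom (Discrete.ext (show a.as = b.as from (leOfHom f).1)), Subsingleton.elim _ _⟩

instance {D : Type} [Category D] (F G : D ⥤ Cc) : Subsingleton (F ⟶ G) :=
  ⟨fun a b => by
    apply NatTrans.ext
    funext x
    apply Subsingleton.elim⟩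

noncomputable def createsLimits : CreatesLimitsOfSize.{0, 0} Uf where
  CreatesLimitsOfShape {J} _ :=
    { CreatesLimit := fun {K} =>
      { lifts := fun c hc => by
          by_cases hJ : IsEmpty J
          · exfalso
            have hl : ∀ x : Cc, x ⟶ c.pt := fun x =>
              hc.lift ⟨x, ⟨fun j => hJ.elim j, fun j => hJ.elim j⟩⟩
            have h1 : (false : Bool) = c.pt.comp := (leOfHom (hl ⟨false, false⟩)).1
            have h2 : (true : Bool) = c.pt.comp := (leOfHom (hl ⟨true, false⟩)).1
            exact absurd (h1.trans h2.symm) (by decide)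
          · haveI : Nonempty J := not_isEmpty_iff.mp hJ
            let j₀ : J := Classical.arbitrary J
            have hpt : c.pt = Uf.obj (K.obj j₀) := minimal (leOfHom (c.π.app j₀))
            have hobj : ∀ j : J, K.obj j₀ = K.obj j := fun j => by
              apply Discrete.ext
              have h1 : c.pt.comp = (K.obj j₀).as := (leOfHom (c.π.app j₀)).1
              have h2 : c.pt.comp = (K.obj j).as := (leOfHom (c.π.app j)).1
              exact h1.symm.trans h2
            exact ⟨⟨K.obj j₀, ⟨fun j => eqToHom (hobj j), fun j j' f => Subsingleton.elim _ _⟩⟩,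
              Cones.ext (eqToIso hpt.symm) (fun j => Subsingleton.elim _ _)⟩ } }

noncomputable def createsColimits : CreatesColimitsOfSize.{0, 0} Uf where
  CreatesColimitsOfShape {J} _ :=
    { CreatesColimit := fun {K} =>
      { lifts := fun c hc => by
          by_cases hJ : IsEmpty J
          · exfalso
            have hl : ∀ x : Cc, c.pt ⟶ x := fun x =>
              hc.desc ⟨x, ⟨fun j => hJ.elim j, fun j => hJ.elim j⟩⟩
            have h1 : c.pt.comp = (false : Bool) := (leOfHom (hl ⟨false, false⟩)).1
            have h2 : c.pt.comp = (true : Bool) := (leOfHom (hl ⟨true, false⟩)).1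
            exact absurd (h1.symm.trans h2) (by decide)
          · haveI : Nonempty J := not_isEmpty_iff.mp hJ
            let j₀ : J := Classical.arbitrary J
            have hobj : ∀ j : J, K.obj j = K.obj j₀ := fun j => by
              apply Discrete.ext
              have h1 : (K.obj j₀).as = c.pt.comp := (leOfHom (c.ι.app j₀)).1
              have h2 : (K.obj j).as = c.pt.comp := (leOfHom (c.ι.app j)).1
              exact h2.trans h1.symm
            have hdesc : c.pt ⟶ Uf.obj (K.obj j₀) :=
              hc.desc ⟨Uf.obj (K.obj j₀),
                ⟨fun j => eqToHom (congrArg Uf.obj (hobj j)),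
                  fun j j' f => Subsingleton.elim _ _⟩⟩
            have hpt : c.pt = Uf.obj (K.obj j₀) := minimal (leOfHom hdesc)
            exact ⟨⟨K.obj j₀, ⟨fun j => eqToHom (hobj j), fun j j' f => Subsingleton.elim _ _⟩⟩,
              Cocones.ext (eqToIso hpt.symm) (fun j => Subsingleton.elim _ _)⟩ } }

lemma le_of_ext {G : Cc ⥤ Cc} (β : Uf ⋙ G ⟶ Uf) (c : Cc) : G.obj c ≤ c := by
  obtain ⟨b, x⟩ := c
  have h0 : G.obj ⟨b, false⟩ = (⟨b, false⟩ : Cc) := minimal (leOfHom (β.app ⟨b⟩))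
  cases x
  · exact h0.le
  · have h1 : (⟨b, false⟩ : Cc) ≤ G.obj ⟨b, true⟩ :=
      h0 ▸ leOfHom (G.map (homOfLE (show (⟨b, false⟩ : Cc) ≤ ⟨b, true⟩ from
        ⟨rfl, Bool.false_le _⟩)))
    exact ⟨h1.1.symm, Bool.le_true _⟩

instance : (𝟭 Cc).IsRightKanExtension (Uf.rightUnitor.hom) where
  nonempty_isUniversal := ⟨IsTerminal.ofUniqueHom
    (fun G => CostructuredArrow.homMk
      ⟨fun c => homOfLE (le_of_ext G.hom c), fun _ _ _ => Subsingleton.elim _ _⟩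
      (Subsingleton.elim _ _))
    (fun G m => by
      apply CostructuredArrow.hom_ext
      apply Subsingleton.elim)⟩

end Stmt17

/-- There exists a functor `U : A ⥤ C` that creates all limits and all colimits (a 'Beck'
forgetful functor), admits a codensity monad (the right Kan extension of `U` along `U`
exists), but has no left adjoint; hence its codensity monad is not a pointwise right Kan
extension. -/
theorem stmt17 :
    ∃ (A : Type) (_ : SmallCategory A) (C : Type) (_ : SmallCategory C) (U : A ⥤ C),
      Nonempty (CreatesLimitsOfSize.{0, 0} U) ∧
      Nonempty (CreatesColimitsOfSize.{0, 0} U) ∧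
      Functor.HasRightKanExtension U U ∧
      ¬ U.IsRightAdjoint ∧
      ¬ Functor.HasPointwiseRightKanExtension U U := by
  refine ⟨Discrete Bool, inferInstance, Stmt17.Cc, inferInstance, Stmt17.Uf,
    ⟨Stmt17.createsLimits⟩, ⟨Stmt17.createsColimits⟩,
    Functor.HasRightKanExtension.mk (𝟭 Stmt17.Cc) Stmt17.Uf.rightUnitor.hom, ?_, ?_⟩
  · intro h
    obtain ⟨L, ⟨adj⟩⟩ := h.exists_leftAdjoint
    have hle := leOfHom (adj.unit.app (⟨false, true⟩ : Stmt17.Cc))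
    exact (by decide : ¬ ((true : Bool) ≤ false)) hle.2
  · intro h
    haveI := h (⟨false, true⟩ : Stmt17.Cc)
    have hempty : IsEmpty (CategoryTheory.StructuredArrow (⟨false, true⟩ : Stmt17.Cc) Stmt17.Uf) :=
      ⟨fun o => (by decide : ¬ ((true : Bool) ≤ false)) (leOfHom o.hom).2⟩
    have hl : ∀ x : Stmt17.Cc, x ⟶ Limits.limit
        (StructuredArrow.proj (⟨false, true⟩ : Stmt17.Cc) Stmt17.Uf ⋙ Stmt17.Uf) := fun x =>
      Limits.limit.lift _ ⟨x, ⟨fun o => hempty.elim o, fun o => hempty.elim o⟩⟩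
    have h1 : (false : Bool) = _ := (leOfHom (hl ⟨false, false⟩)).1
    have h2 : (true : Bool) = _ := (leOfHom (hl ⟨true, false⟩)).1
    exact absurd (h1.trans h2.symm) (by decide)
end
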